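/- For any positive integer $k$ and any integer $n \ge 3$, the wheel graph $C_n + K_1$ satisfies $\dim_k(C_n + K_1) = 3$ if $n \in \{3, 6\}$, and $\dim_k(C_n + K_1) = \lfloor \tfrac{2n+2}{5} \rfloor$ otherwise. -/

import Mathlib

/-!
The wheel has diameter two, so for `k ≥ 1` a set `S` resolves it exactly when the vertices outside
`S` have pairwise distinct traces `N(x) ∩ S`.

Lower bound: let `T` be the landmarks on the rim. The rim vertices outside `T` have distinct
traces of size at most two; at most one trace is empty, at most `|T|` are singletons, and double
counting the rim edges between `T` and its complement bounds the sum of the trace sizes by `2|T|`.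
Hence `2n ≤ 5|T| + 2`. For `n = 6` one uses instead that `7 - |S| ≤ 2^|S|`.

Upper bound: on a cycle of length at least five two vertices have at most one common neighbour, so
two rim vertices with equal nonempty traces are the two neighbours of a landmark `w` and have trace
`{w}`; this is excluded if every landmark has another one within distance two. If moreover at most
one trace is empty and there are at least three landmarks (so that no rim trace equals the hub's
trace `T`), then `T` resolves the wheel. The landmarks of `cycleLandmarks` have these properties
and number at most `⌊(2n+2)/5⌋`. For `n ≤ 6`, explicit resolving sets and the lower bound for
`n = 3` are checked by computation.
-/

open SimpleGraph

/-- The distance-`k` truncated distance `dₖ(x,y) = min{d(x,y), k+1}`, valued in `ℕ∞`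
(so unreachable pairs have distance `⊤`, which is truncated to `k+1`). -/
noncomputable def distK {V : Type*} (G : SimpleGraph V) (k : ℕ) (x y : V) : ℕ∞ :=
  min (G.edist x y) (k + 1)

/-- `S` is a distance-`k` resolving set of `G`. -/
def IsDistKResolving {V : Type*} (G : SimpleGraph V) (k : ℕ) (S : Set V) : Prop :=
  ∀ x y : V, x ≠ y → ∃ z ∈ S, distK G k x z ≠ distK G k y z

/-- The distance-`k` dimension of a finite graph `G`: the minimum cardinality of a
distance-`k` resolving set of `G`. -/
noncomputable def dimK {V : Type*} [Fintype V] (G : SimpleGraph V) (k : ℕ) : ℕ :=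
  sInf { m | ∃ S : Finset V, IsDistKResolving G k ↑S ∧ S.card = m }

/-- The join of two graphs: their disjoint union together with all edges between them. -/
def graphJoin {α β : Type*} (G : SimpleGraph α) (H : SimpleGraph β) :
    SimpleGraph (α ⊕ β) where
  Adj x y := match x, y with
    | Sum.inl a, Sum.inl b => G.Adj a b
    | Sum.inr a, Sum.inr b => H.Adj a b
    | Sum.inl _, Sum.inr _ => True
    | Sum.inr _, Sum.inl _ => True
  symm := by
    constructor
    rintro (a | a) (b | b) h
    · exact G.adj_symm h
    · trivial
    · trivial
    · exact H.adj_symm h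
  loopless := by
    constructor
    rintro (a | a) h
    · exact G.loopless.irrefl a h
    · exact H.loopless.irrefl a h

open Finset

namespace SimpleGraph

variable {V : Type*} (G : SimpleGraph V)

def adjTrace [DecidableRel G.Adj] (S : Finset V) (x : V) : Finset V := {z ∈ S | G.Adj x z}

def IsAdjResolving [DecidableRel G.Adj] (S : Finset V) : Prop :=
  ∀ x ∉ S, ∀ y ∉ S, G.adjTrace S x = G.adjTrace S y → x = y

instance [Fintype V] [DecidableEq V] [DecidableRel G.Adj] (S : Finset V) :
    Decidable (G.IsAdjResolving S) := by
  unfold IsAdjResolving; infer_instance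

variable {G}

theorem edist_eq_ite_of_edist_le_two [DecidableEq V] [DecidableRel G.Adj] {x y : V}
    (h : G.edist x y ≤ 2) : G.edist x y = if x = y then 0 else if G.Adj x y then 1 else 2 := by
  split_ifs with hxy hadj
  · exact edist_eq_zero_iff.mpr hxy
  · exact edist_eq_one_iff_adj.mpr hadj
  · have h0 : G.edist x y ≠ 0 := fun h => hxy (edist_eq_zero_iff.mp h)
    have h1 : G.edist x y ≠ 1 := fun h => hadj (edist_eq_one_iff_adj.mp h)
    lift G.edist x y to ℕ using (h.trans_lt (by decide)).ne with d
    norm_cast at h h0 h1 ⊢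
    omega

theorem distK_eq_ite_of_edist_le_two [DecidableEq V] [DecidableRel G.Adj] {k : ℕ} (hk : 1 ≤ k)
    {x y : V} (h : G.edist x y ≤ 2) :
    distK G k x y = if x = y then 0 else if G.Adj x y then 1 else 2 := by
  have h2k : G.edist x y ≤ k + 1 := h.trans (by exact_mod_cast (by omega : 2 ≤ k + 1))
  rw [distK, min_eq_left h2k, edist_eq_ite_of_edist_le_two h]

theorem isDistKResolving_iff_isAdjResolving [DecidableEq V] [DecidableRel G.Adj] {k : ℕ}
    (hk : 1 ≤ k) (hdiam : ∀ x y, G.edist x y ≤ 2) (S : Finset V) :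
    IsDistKResolving G k S ↔ G.IsAdjResolving S := by
  simp only [IsDistKResolving, distK_eq_ite_of_edist_le_two hk (hdiam _ _), mem_coe]
  constructor
  · intro hS x hx y hy htr
    by_contra hxy
    obtain ⟨z, hz, hne⟩ := hS x y hxy
    have hadj : G.Adj x z ↔ G.Adj y z := by
      simpa [adjTrace, hz] using congrArg (z ∈ ·) htr
    rw [if_neg (ne_of_mem_of_not_mem hz hx).symm, if_neg (ne_of_mem_of_not_mem hz hy).symm] at hne
    simp [hadj] at hne
  · intro hS x y hxy
    by_cases hx : x ∈ S
    · exact ⟨x, hx, by rw [if_pos rfl, if_neg hxy.symm]; split_ifs <;> simp⟩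
    by_cases hy : y ∈ S
    · exact ⟨y, hy, by rw [if_pos rfl, if_neg hxy]; split_ifs <;> simp⟩
    obtain ⟨z, hz⟩ : ∃ z, ¬ (z ∈ G.adjTrace S x ↔ z ∈ G.adjTrace S y) := by
      by_contra! h
      exact hxy (hS x hx y hy (Finset.ext h))
    have hzS : z ∈ S := by by_contra hzS; simp [adjTrace, hzS] at hz
    refine ⟨z, hzS, ?_⟩
    rw [if_neg (ne_of_mem_of_not_mem hzS hx).symm, if_neg (ne_of_mem_of_not_mem hzS hy).symm]
    simp only [adjTrace, mem_filter, hzS, true_and] at hz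
    split_ifs <;> tauto

theorem IsAdjResolving.card_compl_le_two_pow [Fintype V] [DecidableEq V] [DecidableRel G.Adj]
    {S : Finset V} (hS : G.IsAdjResolving S) : #Sᶜ ≤ 2 ^ #S := by
  rw [← card_powerset]
  exact card_le_card_of_injOn (G.adjTrace S) (fun x _ => mem_powerset.mpr (filter_subset _ _))
    fun x hx y hy h => hS x (mem_compl.mp hx) y (mem_compl.mp hy) h

theorem IsAdjResolving.three_le_card [Fintype V] [DecidableEq V] [DecidableRel G.Adj]
    {S : Finset V} (hS : G.IsAdjResolving S) (hV : 7 ≤ Fintype.card V) : 3 ≤ #S := by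
  have h := hS.card_compl_le_two_pow
  rw [card_compl] at h
  by_contra! hlt
  have : 2 ^ #S ≤ 2 ^ 2 := Nat.pow_le_pow_right (by norm_num) (by omega)
  omega

theorem dimK_eq_of_isAdjResolving [Fintype V] [DecidableEq V] [DecidableRel G.Adj] {k c : ℕ}
    (hk : 1 ≤ k) (hdiam : ∀ x y, G.edist x y ≤ 2) {S : Finset V} (hS : G.IsAdjResolving S)
    (hcard : #S ≤ c) (hmin : ∀ T : Finset V, G.IsAdjResolving T → c ≤ #T) : dimK G k = c := by
  simp only [← isDistKResolving_iff_isAdjResolving hk hdiam] at hS hmin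
  have hmem : #S ∈ {m | ∃ T : Finset V, IsDistKResolving G k ↑T ∧ #T = m} := ⟨S, hS, rfl⟩
  refine le_antisymm ((Nat.sInf_le hmem).trans hcard) (le_csInf ⟨_, hmem⟩ ?_)
  rintro _ ⟨T, hT, rfl⟩
  exact hmin T hT

section DegreeLeTwo

variable [Fintype V] [DecidableRel G.Adj]

theorem eq_or_eq_of_adj_of_degree_le_two [DecidableEq V] {w u v x : V} (hdeg : G.degree w ≤ 2)
    (hu : G.Adj w u) (hv : G.Adj w v) (hx : G.Adj w x) (huv : u ≠ v) : x = u ∨ x = v := by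
  by_contra! hxuv
  have hsub : {u, v, x} ⊆ G.neighborFinset w := by
    intro y hy
    simp only [mem_insert, mem_singleton] at hy
    rcases hy with rfl | rfl | rfl <;> simpa
  have := (card_le_card hsub).trans (card_neighborFinset_eq_degree G w ▸ hdeg)
  rw [card_eq_three.mpr ⟨u, v, x, huv, hxuv.1.symm, hxuv.2.symm, rfl⟩] at this
  omega

theorem card_adjTrace_le_degree (S : Finset V) (x : V) : #(G.adjTrace S x) ≤ G.degree x := by
  rw [← card_neighborFinset_eq_degree]
  exact card_le_card fun z hz => by simpa using (mem_filter.mp hz).2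

theorem two_mul_card_le_of_isAdjResolving [DecidableEq V] (hdeg : ∀ v, G.degree v ≤ 2)
    {T : Finset V} (hT : G.IsAdjResolving T) : 2 * Fintype.card V ≤ 5 * #T + 2 := by
  set tr := G.adjTrace T
  have htr : ∀ u, #(tr u) ≤ 2 := fun u => (card_adjTrace_le_degree T u).trans (hdeg u)
  have hsum : ∑ u ∈ Tᶜ, #(tr u) ≤ 2 * #T :=
    calc ∑ u ∈ Tᶜ, #(tr u) = ∑ w ∈ T, #{u ∈ Tᶜ | G.Adj u w} :=
          sum_card_bipartiteAbove_eq_sum_card_bipartiteBelow _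
      _ ≤ ∑ w ∈ T, 2 := sum_le_sum fun w _ =>
          (card_le_card fun u hu => by simpa [adj_comm] using (mem_filter.mp hu).2).trans
            ((card_neighborFinset_eq_degree G w).trans_le (hdeg w))
      _ = 2 * #T := by rw [sum_const, smul_eq_mul, mul_comm]
  have hfiber : ∀ i, #{u ∈ Tᶜ | #(tr u) = i} ≤ (#T).choose i := by
    intro i
    rw [← card_powersetCard]
    refine card_le_card_of_injOn tr (fun u hu => ?_) fun u hu v hv h => ?_
    · exact mem_powersetCard.mpr ⟨filter_subset _ _, (mem_filter.mp hu).2⟩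
    · exact hT u (mem_compl.mp (mem_filter.mp (mem_coe.mp hu)).1)
        v (mem_compl.mp (mem_filter.mp (mem_coe.mp hv)).1) h
  have hcount : 2 * #Tᶜ ≤ ∑ u ∈ Tᶜ, #(tr u) + 2 * #{u ∈ Tᶜ | #(tr u) = 0}
      + #{u ∈ Tᶜ | #(tr u) = 1} := by
    rw [card_filter, card_filter, card_eq_sum_ones Tᶜ, mul_sum, mul_sum, ← sum_add_distrib,
      ← sum_add_distrib]
    refine sum_le_sum fun u _ => ?_
    have := htr u
    split_ifs <;> omega
  have := hfiber 0
  have := hfiber 1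
  have := card_compl T
  have := card_le_univ T
  simp only [Nat.choose_zero_right, Nat.choose_one_right] at *
  omega

theorem isAdjResolving_of_degree_le_two [DecidableEq V] (hdeg : ∀ v, G.degree v ≤ 2)
    (hcommon : ∀ u v a b, u ≠ v → G.Adj u a → G.Adj v a → G.Adj u b → G.Adj v b → a = b)
    {T : Finset V}
    (hempty : ∀ u ∉ T, ∀ v ∉ T, G.adjTrace T u = ∅ → G.adjTrace T v = ∅ → u = v)
    (hnear : ∀ w ∈ T, ∃ x, G.Adj w x ∧ (x ∈ T ∨ ∃ w' ∈ T, w' ≠ w ∧ G.Adj x w')) :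
    G.IsAdjResolving T := by
  intro u hu v hv htr
  by_contra huv
  obtain ⟨w, hwu⟩ : (G.adjTrace T u).Nonempty := by
    rw [nonempty_iff_ne_empty]
    exact fun h => huv (hempty u hu v hv h (htr ▸ h))
  have hwv : w ∈ G.adjTrace T v := htr ▸ hwu
  simp only [adjTrace, mem_filter] at hwu hwv
  obtain ⟨x, hwx, hx⟩ := hnear w hwu.1
  have hxuv := eq_or_eq_of_adj_of_degree_le_two (hdeg w) hwu.2.symm hwv.2.symm hwx huv
  have htrx : G.adjTrace T x = G.adjTrace T u := by
    rcases hxuv with rfl | rfl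
    exacts [rfl, htr.symm]
  have hxT : x ∉ T := by rcases hxuv with rfl | rfl <;> assumption
  obtain ⟨w', hw'T, hw'w, hxw'⟩ := hx.resolve_left hxT
  have hw'u : w' ∈ G.adjTrace T u := htrx ▸ mem_filter.mpr ⟨hw'T, hxw'⟩
  have hw'v : w' ∈ G.adjTrace T v := htr ▸ hw'u
  simp only [adjTrace, mem_filter] at hw'u hw'v
  exact hw'w (hcommon u v w' w huv hw'u.2 hw'v.2 hwu.2 hwv.2)

end DegreeLeTwo

section Join

variable {α β : Type*} (G : SimpleGraph α) (H : SimpleGraph β)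

instance graphJoin.instDecidableRelAdj [DecidableRel G.Adj] [DecidableRel H.Adj] :
    DecidableRel (graphJoin G H).Adj
  | .inl a, .inl b => inferInstanceAs (Decidable (G.Adj a b))
  | .inl _, .inr _ => inferInstanceAs (Decidable True)
  | .inr _, .inl _ => inferInstanceAs (Decidable True)
  | .inr a, .inr b => inferInstanceAs (Decidable (H.Adj a b))

variable {G H}

@[simp] theorem graphJoin_adj_inl_inl {a b : α} :
    (graphJoin G H).Adj (.inl a) (.inl b) ↔ G.Adj a b := Iff.rfl

@[simp] theorem graphJoin_adj_inl_inr {a : α} {b : β} : (graphJoin G H).Adj (.inl a) (.inr b) :=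
  trivial

@[simp] theorem graphJoin_adj_inr_inl {a : α} {b : β} : (graphJoin G H).Adj (.inr b) (.inl a) :=
  trivial

theorem graphJoin_edist_le_two [Nonempty α] [Nonempty β] (x y : α ⊕ β) :
    (graphJoin G H).edist x y ≤ 2 := by
  have h2 : ∀ {x z y : α ⊕ β}, (graphJoin G H).Adj x z → (graphJoin G H).Adj z y →
      (graphJoin G H).edist x y ≤ 2 := fun h₁ h₂ => edist_le (.cons h₁ (.cons h₂ .nil))
  obtain ⟨a₀⟩ := ‹Nonempty α›
  obtain ⟨b₀⟩ := ‹Nonempty β›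
  rcases x with a | b <;> rcases y with a' | b'
  · exact h2 (z := .inr b₀) trivial trivial
  · exact (edist_eq_one_iff_adj.mpr graphJoin_adj_inl_inr).trans_le (by norm_num)
  · exact (edist_eq_one_iff_adj.mpr graphJoin_adj_inr_inl).trans_le (by norm_num)
  · exact h2 (z := .inl a₀) trivial trivial

variable [DecidableRel G.Adj] [DecidableRel H.Adj]

theorem IsAdjResolving.toLeft {S : Finset (α ⊕ β)} (hS : (graphJoin G H).IsAdjResolving S) :
    G.IsAdjResolving S.toLeft := by
  intro u hu v hv htr
  refine Sum.inl_injective (hS _ (by simpa using hu) _ (by simpa using hv) ?_)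
  ext (w | b)
  · simpa [adjTrace] using congrArg (w ∈ ·) htr
  · simp [adjTrace]

theorem isAdjResolving_graphJoin_map_inl [Subsingleton β] {T : Finset α}
    (hT : G.IsAdjResolving T) (hdom : ∀ u ∉ T, G.adjTrace T u ≠ T) :
    (graphJoin G H).IsAdjResolving (T.map .inl) := by
  have htr_inl : ∀ u, (graphJoin G H).adjTrace (T.map .inl) (.inl u) =
      (G.adjTrace T u).map .inl := by
    intro u; ext (w | b) <;> simp [adjTrace]
  have htr_inr : ∀ b, (graphJoin G H).adjTrace (T.map .inl) (.inr b) = T.map .inl := by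
    intro b; ext (w | b') <;> simp [adjTrace]
  rintro (u | a) hu (v | b) hv h
  · rw [htr_inl, htr_inl] at h
    exact congrArg _ (hT u (by simpa using hu) v (by simpa using hv) (Finset.map_injective _ h))
  · rw [htr_inl, htr_inr] at h
    exact absurd (Finset.map_injective _ h) (hdom u (by simpa using hu))
  · rw [htr_inl, htr_inr] at h
    exact absurd (Finset.map_injective _ h).symm (hdom v (by simpa using hv))
  · exact congrArg _ (Subsingleton.elim a b)

end Join

section Cycle

theorem cycleGraph_adj_iff_val {n : ℕ} (hn : 2 ≤ n) {u v : Fin n} :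
    (cycleGraph n).Adj u v ↔
      (u : ℕ) + 1 = v ∨ (v : ℕ) + 1 = u ∨ (u : ℕ) + 1 = v + n ∨ (v : ℕ) + 1 = u + n := by
  have hsub : ∀ a b : Fin n, (a - b : Fin n).val = 1 ↔ (b : ℕ) + 1 = a ∨ (b : ℕ) + 1 = a + n := by
    intro a b
    have := a.isLt
    rcases le_or_gt b a with h | h
    · rw [Fin.sub_val_of_le h]
      have := Fin.le_def.mp h
      omega
    · rw [Fin.coe_sub_iff_lt.mpr h]
      have := Fin.lt_def.mp h
      omega
  rw [cycleGraph_adj', hsub, hsub]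
  omega

theorem cycleGraph_degree_le_two {n : ℕ} (v : Fin n) : (cycleGraph n).degree v ≤ 2 := by
  match n with
  | 0 => exact v.elim0
  | 1 => simp [cycleGraph_one_eq_bot]
  | n + 2 => exact cycleGraph_degree_two_le.trans_le card_le_two

theorem cycleGraph_eq_of_adj_of_adj {n : ℕ} (hn : 5 ≤ n) {u v a b : Fin n} (huv : u ≠ v)
    (hua : (cycleGraph n).Adj u a) (hva : (cycleGraph n).Adj v a)
    (hub : (cycleGraph n).Adj u b) (hvb : (cycleGraph n).Adj v b) : a = b := by
  rw [cycleGraph_adj_iff_val (by omega)] at hua hva hub hvb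
  have := Fin.val_injective.ne huv
  exact Fin.ext (by omega)

end Cycle

section Landmarks

/-- The indices `≡ 1, 3 (mod 5)`, so that the gaps alternate between `2` and `3`. When
`n ≡ 3 (mod 5)` two gaps of `3` would meet at the landmark `n - 2`; it is moved to `n - 3`,
which turns the gaps at the end into `2, 4` (the gap of `4` is where the one empty trace lies). -/
def cycleLandmarks (n : ℕ) : Finset (Fin n) :=
  {i | ((i : ℕ) % 5 = 1 ∨ (i : ℕ) % 5 = 3) ∧ ¬(n % 5 = 3 ∧ (i : ℕ) + 2 = n) ∨
    n % 5 = 3 ∧ (i : ℕ) + 3 = n}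

variable {n : ℕ}

@[simp] theorem mem_cycleLandmarks {i : Fin n} :
    i ∈ cycleLandmarks n ↔ ((i : ℕ) % 5 = 1 ∨ (i : ℕ) % 5 = 3) ∧ ¬(n % 5 = 3 ∧ (i : ℕ) + 2 = n) ∨
      n % 5 = 3 ∧ (i : ℕ) + 3 = n := by
  simp [cycleLandmarks]

theorem card_cycleLandmarks_le (n : ℕ) : #(cycleLandmarks n) ≤ (2 * n + 2) / 5 := by
  rw [← card_range ((2 * n + 2) / 5)]
  refine card_le_card_of_injOn (fun i => (2 * (i : ℕ) + 2) / 5) (fun i hi => ?_)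
    fun i hi j hj h => Fin.ext ?_
  · have := i.isLt
    simp only [mem_coe, mem_cycleLandmarks] at hi
    simp only [mem_coe, mem_range]
    omega
  · have := i.isLt
    have := j.isLt
    simp only [mem_coe, mem_cycleLandmarks] at hi hj
    dsimp only at h
    omega

theorem exists_adj_mem_cycleLandmarks (hn : 7 ≤ n) {u : Fin n} (hu : u ∉ cycleLandmarks n)
    (hlast : (u : ℕ) + 1 ≠ n) : ∃ w ∈ cycleLandmarks n, (cycleGraph n).Adj u w := by
  obtain ⟨a, ha⟩ := u
  simp only [mem_cycleLandmarks, cycleGraph_adj_iff_val (by omega : 2 ≤ n),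
    Fin.exists_iff] at hu hlast ⊢
  by_cases h : a % 5 = 0 ∨ a % 5 = 2
  · exact ⟨a + 1, by omega, by omega, by omega⟩
  · exact ⟨a - 1, by omega, by omega, by omega⟩

theorem exists_near_mem_cycleLandmarks (hn : 7 ≤ n) {w : Fin n} (hw : w ∈ cycleLandmarks n) :
    ∃ x, (cycleGraph n).Adj w x ∧
      (x ∈ cycleLandmarks n ∨ ∃ w' ∈ cycleLandmarks n, w' ≠ w ∧ (cycleGraph n).Adj x w') := by
  obtain ⟨a, ha⟩ := w
  simp only [mem_cycleLandmarks, cycleGraph_adj_iff_val (by omega : 2 ≤ n), ne_eq,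
    Fin.ext_iff, Fin.exists_iff] at hw ⊢
  by_cases hfwd : a % 5 = 1 ∧ a + 2 < n
  · exact ⟨a + 1, by omega, by omega, .inr ⟨a + 2, by omega, by omega, by omega, by omega⟩⟩
  by_cases hwrap : a + 1 = n
  · exact ⟨0, by omega, by omega, .inr ⟨1, by omega, by omega, by omega, by omega⟩⟩
  · exact ⟨a - 1, by omega, by omega, .inr ⟨a - 2, by omega, by omega, by omega, by omega⟩⟩

theorem isAdjResolving_cycleLandmarks (hn : 7 ≤ n) :
    (cycleGraph n).IsAdjResolving (cycleLandmarks n) := by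
  have hlast : ∀ u ∉ cycleLandmarks n, (cycleGraph n).adjTrace (cycleLandmarks n) u = ∅ →
      (u : ℕ) + 1 = n := by
    intro u hu hempty
    by_contra hne
    obtain ⟨w, hw, hadj⟩ := exists_adj_mem_cycleLandmarks hn hu hne
    have hmem : w ∈ (cycleGraph n).adjTrace (cycleLandmarks n) u := mem_filter.mpr ⟨hw, hadj⟩
    simp [hempty] at hmem
  refine isAdjResolving_of_degree_le_two cycleGraph_degree_le_two
    (fun u v a b huv => cycleGraph_eq_of_adj_of_adj (by omega) huv)
    (fun u hu v hv hu' hv' => Fin.ext ?_) fun w hw => exists_near_mem_cycleLandmarks hn hw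
  have := hlast u hu hu'
  have := hlast v hv hv'
  omega

end Landmarks

section Wheel

variable {n : ℕ} {β : Type*} {H : SimpleGraph β} [DecidableRel H.Adj]

theorem two_mul_le_of_isAdjResolving_graphJoin_cycleGraph {S : Finset (Fin n ⊕ β)}
    (hS : (graphJoin (cycleGraph n) H).IsAdjResolving S) : 2 * n ≤ 5 * #S + 2 := by
  have := two_mul_card_le_of_isAdjResolving cycleGraph_degree_le_two hS.toLeft
  rw [Fintype.card_fin] at this
  have := card_toLeft_le (u := S)
  omega

theorem exists_isAdjResolving_graphJoin_cycleGraph [Subsingleton β] (hn : 7 ≤ n) :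
    ∃ S : Finset (Fin n ⊕ β), (graphJoin (cycleGraph n) H).IsAdjResolving S ∧
      #S ≤ (2 * n + 2) / 5 := by
  have hT := isAdjResolving_cycleLandmarks hn
  have hcard : 3 ≤ #(cycleLandmarks n) := by
    have := two_mul_card_le_of_isAdjResolving cycleGraph_degree_le_two hT
    rw [Fintype.card_fin] at this
    omega
  refine ⟨_, isAdjResolving_graphJoin_map_inl hT fun u _ h => ?_,
    by simpa using card_cycleLandmarks_le n⟩
  have := (card_adjTrace_le_degree (cycleLandmarks n) u).trans (cycleGraph_degree_le_two u)
  rw [h] at this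
  omega

end Wheel

end SimpleGraph

/-- For any positive integer `k` and `n ≥ 3`, the wheel `Cₙ + K₁` has
`dimₖ = 3` if `n ∈ {3,6}` and `dimₖ = ⌊(2n+2)/5⌋` otherwise. -/
theorem stmt9 (k n : ℕ) (hk : 1 ≤ k) (hn : 3 ≤ n) :
    (n = 3 ∨ n = 6 →
      dimK (graphJoin (cycleGraph n) (⊤ : SimpleGraph (Fin 1))) k = 3) ∧
    (n ≠ 3 ∧ n ≠ 6 →
      dimK (graphJoin (cycleGraph n) (⊤ : SimpleGraph (Fin 1))) k = (2 * n + 2) / 5) := by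
  have : Nonempty (Fin n) := ⟨⟨0, by omega⟩⟩
  have hdiam := graphJoin_edist_le_two (G := cycleGraph n) (H := (⊤ : SimpleGraph (Fin 1)))
  refine ⟨fun h => ?_, fun h => ?_⟩
  · rcases h with rfl | rfl
    · exact dimK_eq_of_isAdjResolving hk hdiam (S := {.inl 0, .inl 1, .inl 2}) (by decide)
        (by decide) (by decide)
    · exact dimK_eq_of_isAdjResolving hk hdiam (S := {.inl 0, .inl 1, .inl 2}) (by decide)
        (by decide) fun T hT => hT.three_le_card (by simp)
  · obtain ⟨S, hS, hcard⟩ : ∃ S : Finset (Fin n ⊕ Fin 1),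
        (graphJoin (cycleGraph n) ⊤).IsAdjResolving S ∧ #S ≤ (2 * n + 2) / 5 := by
      rcases (by omega : n = 4 ∨ n = 5 ∨ 7 ≤ n) with rfl | rfl | h7
      · exact ⟨{.inl 0, .inl 1}, by decide, by decide⟩
      · exact ⟨{.inl 0, .inl 1}, by decide, by decide⟩
      · exact exists_isAdjResolving_graphJoin_cycleGraph h7
    exact dimK_eq_of_isAdjResolving hk hdiam hS hcard fun T hT => by
      have := two_mul_le_of_isAdjResolving_graphJoin_cycleGraph hT
      omega
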